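/- arXiv:1401.6362 — 5 statements merged into one kernel-verified Lean document; each statement's English description precedes it below -/
import Mathlib

section
/- For every integer T ≥ 2 and every real γ > 0, the BKIC achievable rate strictly exceeds the traditional KIC achievable rate: (1 − 1/T)·log(1 + γ) > log(1 + (T−1)γ/(T+γ)). -/
/-!
With `1 + (T - 1)γ/(T + γ) = (1 + γ)/(1 + γ/T)`, the inequality becomes
`log (1 + γ) < T · log (1 + γ/T)`, i.e. `1 + γ < (1 + γ/T)^T`: Bernoulli's inequality
for the real exponent `T > 1`, strict because `γ ≠ 0`.
-/

open Real

lemma log_one_add_lt_mul_log_one_add_div {t γ : ℝ} (ht : 1 < t) (hγ : 0 < γ) :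
    log (1 + γ) < t * log (1 + γ / t) := by
  have ht₀ : 0 < t := by linarith
  have hs : 0 < γ / t := by positivity
  have hbernoulli : 1 + t * (γ / t) < (1 + γ / t) ^ t :=
    one_add_mul_self_lt_rpow_one_add (by linarith) hs.ne' ht
  rw [mul_div_cancel₀ γ ht₀.ne'] at hbernoulli
  rw [← log_rpow (by positivity)]
  exact log_lt_log (by positivity) hbernoulli

lemma log_one_add_traditional_rate {t γ : ℝ} (ht : 0 < t) (hγ : 0 < γ) :
    log (1 + (t - 1) * γ / (t + γ)) = log (1 + γ) - log (1 + γ / t) := by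
  have hquot : 1 + (t - 1) * γ / (t + γ) = (1 + γ) / (1 + γ / t) := by
    field_simp
    ring
  rw [hquot, log_div (by positivity) (by positivity)]

lemma log_traditional_rate_lt_bkic_rate {t γ : ℝ} (ht : 1 < t) (hγ : 0 < γ) :
    log (1 + (t - 1) * γ / (t + γ)) < (1 - 1 / t) * log (1 + γ) := by
  have ht₀ : 0 < t := by linarith
  have hkey : log (1 + γ) / t < log (1 + γ / t) := by
    rw [div_lt_iff₀' ht₀]
    exact log_one_add_lt_mul_log_one_add_div ht hγ
  rw [log_one_add_traditional_rate ht₀ hγ]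
  linarith [show (1 - 1 / t) * log (1 + γ) = log (1 + γ) - log (1 + γ) / t by ring]

/-- For every integer T ≥ 2 and every real γ > 0, the BKIC achievable rate strictly
exceeds the traditional KIC achievable rate. -/
theorem bkic_rate_gt_traditional (T : ℤ) (hT : 2 ≤ T) (γ : ℝ) (hγ : 0 < γ) :
    (1 - 1 / (T : ℝ)) * Real.log (1 + γ) >
      Real.log (1 + ((T : ℝ) - 1) * γ / ((T : ℝ) + γ)) :=
  log_traditional_rate_lt_bkic_rate (by exact_mod_cast hT) hγ
end

section
/- For every real T > 1, the function g(γ) = log(1 + (T−1)γ/(T+γ)) − (1 − 1/T)·log(1 + γ) is differentiable on (0,∞) and its derivative at every γ > 0 equals −(T−1)γ / (T·(1+γ)·(T+γ)); in particular this derivative is strictly negative for γ > 0. -/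
/-! Since `1 + (T - 1)γ/(T + γ) = T(1 + γ)/(T + γ)`, near any `γ > 0` the function is
`log T + log (1 + γ) - log (T + γ) - (1 - 1/T) log (1 + γ)`, whose derivative is
`1/(1 + γ) - 1/(T + γ) - (1 - 1/T)/(1 + γ) = -(T - 1)γ / (T(1 + γ)(T + γ))`. -/

open Real

lemma one_add_sub_one_mul_div_add {T x : ℝ} (h : T + x ≠ 0) :
    1 + (T - 1) * x / (T + x) = T * (1 + x) / (T + x) := by
  field_simp
  ring

lemma log_one_add_sub_one_mul_div_add {T x : ℝ} (hT : T ≠ 0) (hx : 1 + x ≠ 0)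
    (hTx : T + x ≠ 0) :
    log (1 + (T - 1) * x / (T + x)) = log T + log (1 + x) - log (T + x) := by
  rw [one_add_sub_one_mul_div_add hTx, log_div (mul_ne_zero hT hx) hTx, log_mul hT hx]

lemma hasDerivAt_log_const_add {a x : ℝ} (h : a + x ≠ 0) :
    HasDerivAt (fun y => log (a + y)) (a + x)⁻¹ x := by
  simpa using ((hasDerivAt_id x).const_add a).log h

/-- For every real T > 1, the function g(γ) = log(1 + (T−1)γ/(T+γ)) − (1 − 1/T)·log(1+γ)
has derivative −(T−1)γ/(T(1+γ)(T+γ)) at every γ > 0, which is strictly negative. -/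
theorem deriv_rate_gap (T : ℝ) (hT : 1 < T) (γ : ℝ) (hγ : 0 < γ) :
    HasDerivAt (fun x : ℝ => Real.log (1 + (T - 1) * x / (T + x)) - (1 - 1 / T) * Real.log (1 + x))
      (-((T - 1) * γ) / (T * (1 + γ) * (T + γ))) γ ∧
    -((T - 1) * γ) / (T * (1 + γ) * (T + γ)) < 0 := by
  have hT₀ : 0 < T := by linarith
  have h₁ : 0 < 1 + γ := by linarith
  have h₂ : 0 < T + γ := by linarith
  refine ⟨?_, div_neg_of_neg_of_pos (by nlinarith) (by positivity)⟩
  have hlogs : (fun x => log (1 + (T - 1) * x / (T + x)) - (1 - 1 / T) * log (1 + x)) =ᶠ[nhds γ]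
      fun x => log T + log (1 + x) - log (T + x) - (1 - 1 / T) * log (1 + x) := by
    filter_upwards [lt_mem_nhds hγ] with x hx
    rw [log_one_add_sub_one_mul_div_add hT₀.ne' (by linarith) (by linarith)]
  have hderiv := (((hasDerivAt_log_const_add h₁.ne').const_add (log T)).sub
    (hasDerivAt_log_const_add h₂.ne')).sub ((hasDerivAt_log_const_add h₁.ne').const_mul (1 - 1 / T))
  refine (hderiv.congr_of_eventuallyEq hlogs).congr_deriv ?_
  field_simp
  ring
end

section
/- For every real T > 1, the gap R_BKIC(T,γ) − R_t(T,γ) = (1 − 1/T)·log(1 + γ) − log(1 + (T−1)γ/(T+γ)) tends to +∞ as γ tends to +∞. -/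
/-!
The traditional rate saturates: `1 + (T - 1)γ/(T + γ) ≤ T` for `γ ≥ 0`, so `R_t ≤ log T`,
while `R_BKIC` grows like `(1 - 1/T) log γ`.
-/

open Filter

lemma one_add_mul_div_add_le {T γ : ℝ} (hT : 1 ≤ T) (hγ : 0 ≤ γ) :
    1 + (T - 1) * γ / (T + γ) ≤ T := by
  have hTγ : 0 < T + γ := by linarith
  have : (T - 1) * γ / (T + γ) ≤ T - 1 := by
    rw [div_le_iff₀ hTγ]
    nlinarith
  linarith

lemma log_one_add_mul_div_add_le_log {T γ : ℝ} (hT : 1 ≤ T) (hγ : 0 ≤ γ) :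
    Real.log (1 + (T - 1) * γ / (T + γ)) ≤ Real.log T := by
  have hfrac : 0 ≤ (T - 1) * γ / (T + γ) := by
    apply div_nonneg <;> nlinarith
  exact Real.log_le_log (by linarith) (one_add_mul_div_add_le hT hγ)

lemma tendsto_const_mul_log_one_add_atTop {c : ℝ} (hc : 0 < c) :
    Tendsto (fun γ : ℝ => c * Real.log (1 + γ)) atTop atTop :=
  (Real.tendsto_log_atTop.comp (tendsto_atTop_add_const_left _ 1 tendsto_id)).const_mul_atTop hc

/-- For every real T > 1, the gap R_BKIC − R_t tends to +∞ as γ → +∞. -/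
theorem gap_tendsto_atTop (T : ℝ) (hT : 1 < T) :
    Tendsto (fun γ : ℝ =>
        (1 - 1 / T) * Real.log (1 + γ) - Real.log (1 + (T - 1) * γ / (T + γ)))
      atTop atTop := by
  have hc : 0 < 1 - 1 / T := by
    have : 1 / T < 1 := (div_lt_one (by linarith)).mpr hT
    linarith
  have hlower : Tendsto (fun γ : ℝ => (1 - 1 / T) * Real.log (1 + γ) - Real.log T) atTop atTop :=
    tendsto_atTop_add_const_right _ _ (tendsto_const_mul_log_one_add_atTop hc)
  refine tendsto_atTop_mono' atTop ?_ hlower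
  filter_upwards [eventually_ge_atTop (0 : ℝ)] with γ hγ
  linarith [log_one_add_mul_div_add_le_log hT.le hγ]
end

section
/- Fix reals γ > 0 and ρ > 0. As the integer block length T tends to infinity, the difference C_u(T,ρ,γ) − R_t(T,γ) = [(1 − 1/T)·log(1+γ) + (1/T)·log(1 + ργ/(ρ + Tγ))] − log(1 + (T−1)γ/(T+γ)) tends to 0. -/
/-! Both rates tend to `log (1 + γ)`: the interference term of `C_u` is weighted by `1 / T` and
its argument tends to `1`, while the effective SNR `(T - 1) γ / (T + γ)` of `R_t` tends to `γ`. -/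

open Filter Topology Real

noncomputable def capacityUpperBound (T : ℕ) (ρ γ : ℝ) : ℝ :=
  (1 - 1 / (T : ℝ)) * log (1 + γ) + (1 / (T : ℝ)) * log (1 + ρ * γ / (ρ + (T : ℝ) * γ))

noncomputable def traditionalKICRate (T : ℕ) (γ : ℝ) : ℝ :=
  log (1 + ((T : ℝ) - 1) * γ / ((T : ℝ) + γ))

theorem tendsto_capacityUpperBound (ρ : ℝ) {γ : ℝ} (hγ : γ ≠ 0) :
    Tendsto (fun T : ℕ => capacityUpperBound T ρ γ) atTop (𝓝 (log (1 + γ))) := by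
  have hratio : Tendsto (fun T : ℕ => ρ * γ / (ρ + (T : ℝ) * γ)) atTop (𝓝 0) := by
    simpa only [zero_mul, add_zero, zero_div, mul_comm γ] using
      tendsto_add_mul_div_add_mul_atTop_nhds (ρ * γ) ρ 0 hγ
  have hlog : Tendsto (fun T : ℕ => log (1 + ρ * γ / (ρ + (T : ℝ) * γ))) atTop (𝓝 0) := by
    simpa using (hratio.const_add 1).log (by norm_num)
  have hweight : Tendsto (fun T : ℕ => 1 / (T : ℝ)) atTop (𝓝 0) :=
    tendsto_one_div_atTop_nhds_zero_nat
  simpa [capacityUpperBound] using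
    ((hweight.const_sub 1).mul_const (log (1 + γ))).add (hweight.mul hlog)

theorem tendsto_traditionalKICRate {γ : ℝ} (hγ : 1 + γ ≠ 0) :
    Tendsto (fun T : ℕ => traditionalKICRate T γ) atTop (𝓝 (log (1 + γ))) := by
  have hsinr : Tendsto (fun T : ℕ => ((T : ℝ) - 1) * γ / ((T : ℝ) + γ)) atTop (𝓝 γ) := by
    simpa only [div_one] using
      (tendsto_add_mul_div_add_mul_atTop_nhds (-γ) γ γ one_ne_zero).congr fun T => by ring
  exact (hsinr.const_add 1).log hγ

theorem upper_minus_traditional_tendsto_zero_general (γ ρ : ℝ) (hγ : 0 < γ) :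
    Tendsto (fun T : ℕ =>
        ((1 - 1 / (T : ℝ)) * Real.log (1 + γ)
          + (1 / (T : ℝ)) * Real.log (1 + ρ * γ / (ρ + (T : ℝ) * γ)))
        - Real.log (1 + ((T : ℝ) - 1) * γ / ((T : ℝ) + γ)))
      atTop (nhds 0) := by
  have h := (tendsto_capacityUpperBound ρ hγ.ne').sub
    (tendsto_traditionalKICRate (γ := γ) (by positivity))
  rwa [sub_self] at h

/-- Fix γ > 0 and ρ > 0. As the block length T → ∞, the difference C_u − R_t tends to 0. -/
theorem upper_minus_traditional_tendsto_zero (γ ρ : ℝ) (hγ : 0 < γ) (hρ : 0 < ρ) :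
    Tendsto (fun T : ℕ =>
        ((1 - 1 / (T : ℝ)) * Real.log (1 + γ)
          + (1 / (T : ℝ)) * Real.log (1 + ρ * γ / (ρ + (T : ℝ) * γ)))
        - Real.log (1 + ((T : ℝ) - 1) * γ / ((T : ℝ) + γ)))
      atTop (nhds 0) :=
  upper_minus_traditional_tendsto_zero_general γ ρ hγ
end

section
/- Fix a real T > 1. As γ → +∞, the normalized BKIC rate R_BKIC(T,γ)/log γ = (1 − 1/T)·log(1+γ)/log γ tends to 1 − 1/T (nonzero degrees of freedom), while the normalized traditional KIC rate R_t(T,γ)/log γ = log(1 + (T−1)γ/(T+γ))/log γ tends to 0 (zero degrees of freedom). -/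
open Filter Real Topology

/-! `log (1 + γ) - log γ → 0`, so `log (1 + γ) / log γ → 1`; whereas the argument
`1 + (T - 1) γ / (T + γ)` of the traditional rate tends to the constant `T`, so its logarithm
stays bounded and is killed by the division by `log γ → ∞`. -/

theorem tendsto_div_add_atTop (a : ℝ) : Tendsto (fun x : ℝ => x / (a + x)) atTop (𝓝 1) := by
  have hsmall : Tendsto (fun x : ℝ => a / (a + x)) atTop (𝓝 0) :=
    (tendsto_atTop_add_const_left atTop a tendsto_id).const_div_atTop a
  have hone : Tendsto (fun x : ℝ => 1 - a / (a + x)) atTop (𝓝 1) := by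
    simpa using tendsto_const_nhds.sub hsmall
  refine hone.congr' ?_
  filter_upwards [eventually_gt_atTop (-a)] with x hx
  have hax : a + x ≠ 0 := by linarith
  field_simp
  ring

theorem tendsto_log_comp_div_log_of_tendsto {f : ℝ → ℝ} {c : ℝ}
    (hf : Tendsto f atTop (𝓝 c)) (hc : c ≠ 0) :
    Tendsto (fun x => log (f x) / log x) atTop (𝓝 0) :=
  ((continuousAt_log hc).tendsto.comp hf).div_atTop tendsto_log_atTop

theorem tendsto_log_add_div_log_atTop (a : ℝ) :
    Tendsto (fun x : ℝ => log (a + x) / log x) atTop (𝓝 1) := by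
  have hgap : Tendsto (fun x : ℝ => 1 + (log (x + a) - log x) / log x) atTop (𝓝 1) := by
    simpa using tendsto_const_nhds.add
      ((tendsto_log_comp_add_sub_log a).div_atTop tendsto_log_atTop)
  refine hgap.congr' ?_
  filter_upwards [eventually_gt_atTop 1] with x hx
  have hlog : log x ≠ 0 := (log_pos hx).ne'
  rw [add_comm x a]
  field_simp
  ring

/-- Fix T > 1. As γ → +∞, R_BKIC/log γ → 1 − 1/T (nonzero DoF) while
R_t/log γ → 0 (zero DoF). -/
theorem degrees_of_freedom (T : ℝ) (hT : 1 < T) :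
    Tendsto (fun γ : ℝ => (1 - 1 / T) * Real.log (1 + γ) / Real.log γ)
      atTop (nhds (1 - 1 / T)) ∧
    Tendsto (fun γ : ℝ => Real.log (1 + (T - 1) * γ / (T + γ)) / Real.log γ)
      atTop (nhds 0) := by
  constructor
  · simpa [mul_div_assoc] using (tendsto_log_add_div_log_atTop 1).const_mul (1 - 1 / T)
  · have harg : Tendsto (fun γ : ℝ => 1 + (T - 1) * γ / (T + γ)) atTop (𝓝 T) := by
      simpa [mul_div_assoc] using
        tendsto_const_nhds.add ((tendsto_div_add_atTop T).const_mul (T - 1)) (a := (1 : ℝ))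
    exact tendsto_log_comp_div_log_of_tendsto harg (by linarith)
end
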